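/- arXiv:cs/0310036 — 8 statements merged into one kernel-verified Lean document; each statement's English description precedes it below -/
import Mathlib

section
/- (Support Theorem) Let w be a weighting on a finite set V with edge set E = E(w) and Laplacian A = L_w. Let F ⊆ E and let B = L_{w|_F}. Let π : E × F → ℝ be nonnegative and suppose that for every edge e = {u,v} ∈ E the set path_π(e) = { f ∈ F : π(e,f) > 0 } is the edge set of a simple path in the graph (V, F) from u to v (that is, path_π(e) = { {x₀,x₁}, …, {x_{k−1},x_k} } for some distinct vertices x₀ = u, x₁, …, x_k = v). For e ∈ E define the weighted dilation wdilation_π(e) = Σ_{f ∈ path_π(e)} w(e)/(w(f)·π(e,f)), and for f ∈ F define the weighted congestion wcong_π(f) = Σ_{e ∈ E : f ∈ path_π(e)} wdilation_π(e)·π(e,f). Then κ_f(A,B) ≤ max_{f ∈ F} wcong_π(f). -/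
open Matrix Finset

noncomputable section

/-- The Laplacian matrix of a weighting `w` on a finite vertex set `V`. -/
def lap {V : Type*} [Fintype V] [DecidableEq V] (w : V → V → ℝ) : Matrix V V ℝ :=
  fun u v => if u = v then ∑ x, w v x else -(w u v)

/-- A weighting on `V`: symmetric, nonnegative, zero on the diagonal. -/
structure IsWeighting {V : Type*} (w : V → V → ℝ) : Prop where
  symm : ∀ u v, w u v = w v u
  nonneg : ∀ u v, 0 ≤ w u v
  diag : ∀ v, w v v = 0

/-- The edge set of a weighting: unordered pairs of distinct vertices of positive weight. -/
def edgeSetW {V : Type*} (w : V → V → ℝ) : Set (Sym2 V) :=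
  {e | ∃ u v, e = s(u, v) ∧ u ≠ v ∧ 0 < w u v}

open Classical in
/-- The restriction of a weighting to a set `F` of unordered pairs. -/
def restrictW {V : Type*} (w : V → V → ℝ) (F : Set (Sym2 V)) : V → V → ℝ :=
  fun u v => if s(u, v) ∈ F then w u v else 0

/-- `κ_f(A,B)`: the product of the two suprema of Rayleigh-quotient ratios over
vectors `x` with `A x ≠ 0`. -/
def kappaF {n : Type*} [Fintype n] (A B : Matrix n n ℝ) : ℝ :=
  sSup {r | ∃ x : n → ℝ, A *ᵥ x ≠ 0 ∧ r = (x ⬝ᵥ (A *ᵥ x)) / (x ⬝ᵥ (B *ᵥ x))} *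
  sSup {r | ∃ x : n → ℝ, A *ᵥ x ≠ 0 ∧ r = (x ⬝ᵥ (B *ᵥ x)) / (x ⬝ᵥ (A *ᵥ x))}

open Classical in
/-- The weighted dilation of an edge `e` under a weighted embedding `π` into edges of `F`,
where `we : Sym2 V → ℝ` gives the weight of an unordered pair. -/
def wdil {V : Type*} [Fintype V] [DecidableEq V] (we : Sym2 V → ℝ) (F : Set (Sym2 V))
    (π : Sym2 V → Sym2 V → ℝ) (e : Sym2 V) : ℝ :=
  ∑ f : Sym2 V, if f ∈ F ∧ 0 < π e f then we e / (we f * π e f) else 0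

open Classical in
/-- The weighted congestion of an edge `f ∈ F` under a weighted embedding `π` of the
edges in `E` into paths made of edges of `F`. -/
def wcong {V : Type*} [Fintype V] [DecidableEq V] (we : Sym2 V → ℝ) (E F : Set (Sym2 V))
    (π : Sym2 V → Sym2 V → ℝ) (f : Sym2 V) : ℝ :=
  ∑ e : Sym2 V, if e ∈ E ∧ f ∈ F ∧ 0 < π e f then wdil we F π e * π e f else 0

/- ### Auxiliary lemmas -/

lemma walk_telescope {V : Type*} {G : SimpleGraph V} {u v : V} (p : G.Walk u v) (x : V → ℝ) :
    (p.darts.map (fun d => x d.toProd.1 - x d.toProd.2)).sum = x u - x v := by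
  induction p with
  | nil => simp
  | cons h q ih => simp [SimpleGraph.Walk.darts_cons, ih]

open Classical in
lemma half_sum_sym2 {V : Type*} [Fintype V] [DecidableEq V] (g : Sym2 V → ℝ)
    (hg : ∀ v, g s(v, v) = 0) :
    ∑ p : Sym2 V, g p = (1/2) * ∑ u, ∑ v, g s(u, v) := by
  letI : LinearOrder V := IsWellOrder.linearOrder WellOrderingRel
  have hdiag : ∀ p : Sym2 V, p.IsDiag → g p = 0 := by
    intro p
    induction p using Sym2.ind with
    | _ a b => intro hab; rw [Sym2.mk_isDiag_iff] at hab; subst hab; exact hg a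
  have h1 : ∑ p : Sym2 V, g p
      = ∑ i ∈ univ.offDiag.filter (fun i : V × V => i.1 < i.2), g s(i.1, i.2) := by
    calc ∑ p : Sym2 V, g p
        = ∑ p ∈ (univ : Finset V).sym2.filter (fun p => ¬ p.IsDiag), g p := by
          rw [Finset.sym2_univ]
          rw [← Finset.sum_filter_add_sum_filter_not (univ : Finset (Sym2 V))
            (fun p => ¬ p.IsDiag) g]
          have : ∑ p ∈ (univ : Finset (Sym2 V)).filter (fun p => ¬¬ p.IsDiag), g p = 0 := by
            apply Finset.sum_eq_zero
            intro p hp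
            simp only [Finset.mem_filter, not_not] at hp
            exact hdiag p hp.2
          rw [this, add_zero]
      _ = ∑ i ∈ univ.offDiag.filter (fun i : V × V => i.1 < i.2), g s(i.1, i.2) := by
          have := Finset.sum_sym2_filter_not_isDiag (univ : Finset V) g
          convert this using 2 <;> (ext i; simp)
  have hswap : ∑ i ∈ univ.offDiag.filter (fun i : V × V => ¬ i.1 < i.2), g s(i.1, i.2)
      = ∑ i ∈ univ.offDiag.filter (fun i : V × V => i.1 < i.2), g s(i.1, i.2) := by
    apply Finset.sum_bij' (fun i _ => Prod.swap i) (fun i _ => Prod.swap i)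
    · intro a ha
      simp only [Finset.mem_filter, Finset.mem_offDiag, Finset.mem_univ, true_and] at ha ⊢
      exact ⟨ha.1.symm, lt_of_le_of_ne (not_lt.mp ha.2) (Ne.symm ha.1)⟩
    · intro a ha
      simp only [Finset.mem_filter, Finset.mem_offDiag, Finset.mem_univ, true_and] at ha ⊢
      exact ⟨ha.2.ne', not_lt.mpr ha.2.le⟩
    · intro a _; simp
    · intro a _; simp
    · intro a _; simp [Sym2.eq_swap]
  have h2 : ∑ u, ∑ v, g s(u, v)
      = 2 * ∑ i ∈ univ.offDiag.filter (fun i : V × V => i.1 < i.2), g s(i.1, i.2) := by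
    rw [← Finset.sum_product']
    have hod : (univ ×ˢ univ : Finset (V × V)).filter (fun i => ¬ i.1 = i.2) = univ.offDiag := by
      ext i; simp [Finset.mem_offDiag]
    rw [← Finset.sum_filter_add_sum_filter_not (univ ×ˢ univ : Finset (V × V))
      (fun i => ¬ i.1 = i.2) (fun i => g s(i.1, i.2))]
    have hz : ∑ i ∈ (univ ×ˢ univ : Finset (V × V)).filter (fun i => ¬¬ i.1 = i.2),
        g s(i.1, i.2) = 0 := by
      apply Finset.sum_eq_zero
      intro i hi
      simp only [Finset.mem_filter, not_not] at hi
      rw [hi.2]; exact hg i.2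
    rw [hz, add_zero, hod,
      ← Finset.sum_filter_add_sum_filter_not univ.offDiag (fun i : V × V => i.1 < i.2)
        (fun i => g s(i.1, i.2)), hswap]
    ring
  rw [h1, h2]; ring

lemma lap_row {V : Type*} [Fintype V] [DecidableEq V] {w : V → V → ℝ} (hw : IsWeighting w)
    (x : V → ℝ) (u : V) : (lap w *ᵥ x) u = ∑ v, w u v * (x u - x v) := by
  have h1 : ∀ v : V, lap w u v * x v
      = (if u = v then (∑ t, w u t) * x u else 0) - w u v * x v := by
    intro v
    by_cases h : u = v
    · subst h; simp [lap, hw.diag u]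
    · simp [lap, h]
  calc (lap w *ᵥ x) u = ∑ v, lap w u v * x v := rfl
    _ = ∑ v, ((if u = v then (∑ t, w u t) * x u else 0) - w u v * x v) :=
        Finset.sum_congr rfl (fun v _ => h1 v)
    _ = (∑ v, (if u = v then (∑ t, w u t) * x u else 0)) - ∑ v, w u v * x v := by
        rw [Finset.sum_sub_distrib]
    _ = (∑ t, w u t) * x u - ∑ v, w u v * x v := by rw [Finset.sum_ite_eq]; simp
    _ = ∑ v, w u v * (x u - x v) := by
        rw [Finset.sum_mul, ← Finset.sum_sub_distrib]
        exact Finset.sum_congr rfl (fun v _ => by ring)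

lemma lap_quad {V : Type*} [Fintype V] [DecidableEq V] {w : V → V → ℝ} (hw : IsWeighting w)
    (x : V → ℝ) :
    x ⬝ᵥ (lap w *ᵥ x) = (1/2) * ∑ u, ∑ v, w u v * (x u - x v)^2 := by
  have hS : x ⬝ᵥ (lap w *ᵥ x) = ∑ u, ∑ v, w u v * (x u * (x u - x v)) := by
    calc x ⬝ᵥ (lap w *ᵥ x) = ∑ u, x u * ∑ v, w u v * (x u - x v) :=
          Finset.sum_congr rfl (fun u _ => by rw [lap_row hw])
      _ = ∑ u, ∑ v, w u v * (x u * (x u - x v)) := by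
          refine Finset.sum_congr rfl (fun u _ => ?_)
          rw [Finset.mul_sum]
          exact Finset.sum_congr rfl (fun v _ => by ring)
  have hswap : ∑ u, ∑ v, w u v * (x u * (x u - x v))
      = ∑ u, ∑ v, w u v * (x v * (x v - x u)) := by
    rw [Finset.sum_comm]
    exact Finset.sum_congr rfl (fun u _ => Finset.sum_congr rfl (fun v _ => by rw [hw.symm]))
  have key : (x ⬝ᵥ (lap w *ᵥ x)) + (x ⬝ᵥ (lap w *ᵥ x))
      = ∑ u, ∑ v, w u v * (x u - x v)^2 := by
    rw [hS]
    nth_rewrite 2 [hswap]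
    rw [← Finset.sum_add_distrib]
    refine Finset.sum_congr rfl (fun u _ => ?_)
    rw [← Finset.sum_add_distrib]
    exact Finset.sum_congr rfl (fun v _ => by ring)
  linarith

lemma lap_quad_nonneg {V : Type*} [Fintype V] [DecidableEq V] {w : V → V → ℝ}
    (hw : IsWeighting w) (x : V → ℝ) : 0 ≤ x ⬝ᵥ (lap w *ᵥ x) := by
  rw [lap_quad hw]
  have h : ∀ u ∈ (univ : Finset V), 0 ≤ ∑ v, w u v * (x u - x v)^2 := fun u _ =>
    Finset.sum_nonneg (fun v _ => mul_nonneg (hw.nonneg u v) (sq_nonneg _))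
  have := Finset.sum_nonneg h
  linarith

lemma lap_posSemidef {V : Type*} [Fintype V] [DecidableEq V] {w : V → V → ℝ}
    (hw : IsWeighting w) : (lap w).PosSemidef := by
  refine Matrix.posSemidef_iff_dotProduct_mulVec.mpr ⟨?_, ?_⟩
  · ext u v
    simp only [Matrix.conjTranspose_apply, lap, star_trivial]
    by_cases h : u = v
    · subst h; simp
    · simp [h, Ne.symm h, hw.symm u v]
  · intro x
    have hx : star x = x := funext fun v => star_trivial _
    rw [hx]
    exact lap_quad_nonneg hw x

lemma lap_quad_pos {V : Type*} [Fintype V] [DecidableEq V] {w : V → V → ℝ}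
    (hw : IsWeighting w) {x : V → ℝ} (hx : lap w *ᵥ x ≠ 0) : 0 < x ⬝ᵥ (lap w *ᵥ x) := by
  rcases (lap_quad_nonneg hw x).eq_or_lt with h | h
  · exfalso
    apply hx
    have hstar : star x = x := funext fun v => star_trivial _
    exact ((lap_posSemidef hw).dotProduct_mulVec_zero_iff x).mp (by rw [hstar]; exact h.symm)
  · exact h


/-- **Support Theorem.** If `π` is a nonnegative weighted embedding that routes every edge
`e = {u,v}` of the weighting `w` along (the edge set of) a simple path from `u` to `v`
in the subgraph `(V, F)`, then `κ_f(L_w, L_{w|F})` is bounded by the maximum weighted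
congestion of an edge of `F`. -/
theorem support_theorem {V : Type*} [Fintype V] [DecidableEq V]
    (w : V → V → ℝ) (hw : IsWeighting w)
    (F : Set (Sym2 V)) (hF : F ⊆ edgeSetW w)
    (π : Sym2 V → Sym2 V → ℝ) (hπ : ∀ e f, 0 ≤ π e f)
    (hpath : ∀ u v : V, s(u, v) ∈ edgeSetW w →
      ∃ p : (SimpleGraph.fromEdgeSet F).Walk u v, p.IsPath ∧
        {f : Sym2 V | f ∈ F ∧ 0 < π s(u, v) f} = {f : Sym2 V | f ∈ p.edges}) :
    kappaF (lap w) (lap (restrictW w F)) ≤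
      sSup ((wcong (Sym2.lift ⟨w, hw.symm⟩) (edgeSetW w) F π) '' F) := by
  classical
  set we : Sym2 V → ℝ := Sym2.lift ⟨w, hw.symm⟩ with hwedef
  have hwe : ∀ a b : V, we s(a, b) = w a b := fun a b => by simp [hwedef]
  have hwe_nonneg : ∀ f, 0 ≤ we f := fun f =>
    Sym2.ind (fun a b => by rw [hwe]; exact hw.nonneg a b) f
  have hFpos : ∀ f ∈ F, 0 < we f := by
    intro f hf
    obtain ⟨a, b, rfl, hab, hpos⟩ := hF hf
    rw [hwe]; exact hpos
  have hmemE : ∀ u v : V, s(u, v) ∈ edgeSetW w ↔ u ≠ v ∧ 0 < w u v := by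
    intro u v
    constructor
    · rintro ⟨a, b, heq, hab, hpos⟩
      rw [Sym2.eq_iff] at heq
      rcases heq with ⟨rfl, rfl⟩ | ⟨rfl, rfl⟩
      · exact ⟨hab, hpos⟩
      · exact ⟨hab.symm, by rw [hw.symm]; exact hpos⟩
    · rintro ⟨h1, h2⟩; exact ⟨u, v, rfl, h1, h2⟩
  set C := sSup ((wcong we (edgeSetW w) F π) '' F) with hCdef
  have hwdil_nonneg : ∀ e, 0 ≤ wdil we F π e := by
    intro e
    apply Finset.sum_nonneg
    intro f _
    split
    · exact div_nonneg (hwe_nonneg e) (mul_nonneg (hwe_nonneg f) (hπ e f))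
    · exact le_refl 0
  have hwcong_nonneg : ∀ f, 0 ≤ wcong we (edgeSetW w) F π f := by
    intro f
    apply Finset.sum_nonneg
    intro e _
    split
    · exact mul_nonneg (hwdil_nonneg e) (hπ e f)
    · exact le_refl 0
  have hC0 : 0 ≤ C := Real.sSup_nonneg (by rintro r ⟨f, hf, rfl⟩; exact hwcong_nonneg f)
  have hbdd : BddAbove ((wcong we (edgeSetW w) F π) '' F) := (F.toFinite.image _).bddAbove
  have hCle : ∀ f ∈ F, wcong we (edgeSetW w) F π f ≤ C := fun f hf =>
    le_csSup hbdd ⟨f, hf, rfl⟩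
  have hBw : IsWeighting (restrictW w F) := by
    constructor
    · intro u v
      unfold restrictW
      rw [hw.symm u v, Sym2.eq_swap]
    · intro u v
      unfold restrictW
      split
      · exact hw.nonneg u v
      · exact le_refl 0
    · intro v
      unfold restrictW
      split <;> simp [hw.diag]
  -- the main quadratic-form inequality
  have hmain : ∀ x : V → ℝ,
      x ⬝ᵥ (lap w *ᵥ x) ≤ C * (x ⬝ᵥ (lap (restrictW w F) *ᵥ x)) := by
    intro x
    set D : Sym2 V → ℝ := Sym2.lift ⟨fun a b => (x a - x b)^2, fun a b => by ring⟩ with hDdef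
    have hD : ∀ a b : V, D s(a, b) = (x a - x b)^2 := fun a b => by simp [hDdef]
    have hD0 : ∀ f, 0 ≤ D f := fun f =>
      Sym2.ind (fun a b => by rw [hD]; exact sq_nonneg _) f
    set g : Sym2 V → ℝ := fun e =>
      if e ∈ edgeSetW w then
        wdil we F π e * ∑ f : Sym2 V, (if f ∈ F ∧ 0 < π e f then we f * π e f * D f else 0)
      else 0 with hgdef
    have hg0 : ∀ e, 0 ≤ g e := by
      intro e
      rw [hgdef]
      dsimp only
      split
      · refine mul_nonneg (hwdil_nonneg e) (Finset.sum_nonneg fun f _ => ?_)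
        split
        · next h => exact mul_nonneg (mul_nonneg (hwe_nonneg f) (hπ e f)) (hD0 f)
        · exact le_refl 0
      · exact le_refl 0
    have hgdiag : ∀ v, g s(v, v) = 0 := by
      intro v
      rw [hgdef]
      dsimp only
      rw [if_neg]
      intro hmem
      exact ((hmemE v v).mp hmem).1 rfl
    have claimA : ∀ u v : V, w u v * (x u - x v)^2 ≤ g s(u, v) := by
      intro u v
      by_cases hpos : 0 < w u v
      · have hne : u ≠ v := by
          intro h; subst h; rw [hw.diag] at hpos; exact lt_irrefl 0 hpos
        have hEuv : s(u, v) ∈ edgeSetW w := (hmemE u v).mpr ⟨hne, hpos⟩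
        obtain ⟨p, hp, hset⟩ := hpath u v hEuv
        have hedup : p.edges.Nodup := hp.edges_nodup
        have hddup : p.darts.Nodup := hedup.of_map _
        have hdartF : ∀ d ∈ p.darts.toFinset, d.edge ∈ F ∧ 0 < π s(u, v) d.edge := by
          intro d hd
          have hmem : d.edge ∈ p.edges := List.mem_map_of_mem (List.mem_toFinset.mp hd)
          exact (Set.ext_iff.mp hset d.edge).mpr hmem
        have hcpos : ∀ d ∈ p.darts.toFinset, 0 < we d.edge * π s(u, v) d.edge := fun d hd =>
          mul_pos (hFpos _ (hdartF d hd).1) (hdartF d hd).2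
        have htel : ∑ d ∈ p.darts.toFinset, (x d.toProd.1 - x d.toProd.2) = x u - x v := by
          rw [List.sum_toFinset _ hddup]; exact walk_telescope p x
        have hDe : ∀ d : (SimpleGraph.fromEdgeSet F).Dart,
            D d.edge = (x d.toProd.1 - x d.toProd.2)^2 := fun d => hD d.toProd.1 d.toProd.2
        have hCS := Finset.sum_sq_le_sum_mul_sum_of_sq_eq_mul p.darts.toFinset
          (r := fun d => x d.toProd.1 - x d.toProd.2)
          (f := fun d => 1 / (we d.edge * π s(u, v) d.edge))
          (g := fun d => (we d.edge * π s(u, v) d.edge) * D d.edge)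
          (fun d hd => one_div_nonneg.mpr (hcpos d hd).le)
          (fun d hd => mul_nonneg (hcpos d hd).le (hD0 _))
          (fun d hd => by
            rw [hDe d]
            have hc := (hcpos d hd).ne'
            rw [← mul_assoc, one_div_mul_cancel hc, one_mul])
        have hfil : (univ.filter (fun f : Sym2 V => f ∈ F ∧ 0 < π s(u, v) f))
            = p.edges.toFinset := by
          ext f
          simp only [Finset.mem_filter, Finset.mem_univ, true_and, List.mem_toFinset]
          exact Set.ext_iff.mp hset f
        have himg : p.darts.toFinset.image SimpleGraph.Dart.edge = p.edges.toFinset := by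
          ext a
          simp [SimpleGraph.Walk.edges]
        have hinj : ∀ d1 ∈ p.darts.toFinset, ∀ d2 ∈ p.darts.toFinset,
            d1.edge = d2.edge → d1 = d2 := by
          intro d1 h1 d2 h2 hh
          exact List.inj_on_of_nodup_map hedup (List.mem_toFinset.mp h1)
            (List.mem_toFinset.mp h2) hh
        have hsum1 : ∑ d ∈ p.darts.toFinset, 1 / (we d.edge * π s(u, v) d.edge)
            = ∑ f ∈ p.edges.toFinset, 1 / (we f * π s(u, v) f) := by
          rw [← himg]
          exact (Finset.sum_image (f := fun f => 1 / (we f * π s(u, v) f)) hinj).symm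
        have hsum2 : ∑ d ∈ p.darts.toFinset, (we d.edge * π s(u, v) d.edge) * D d.edge
            = ∑ f ∈ p.edges.toFinset, (we f * π s(u, v) f) * D f := by
          rw [← himg]
          exact (Finset.sum_image (f := fun f => (we f * π s(u, v) f) * D f) hinj).symm
        have hwdil : wdil we F π s(u, v)
            = w u v * ∑ f ∈ p.edges.toFinset, 1 / (we f * π s(u, v) f) := by
          unfold wdil
          rw [← Finset.sum_filter, hfil, Finset.mul_sum]
          refine Finset.sum_congr rfl (fun f hf => ?_)
          rw [hwe, mul_one_div]
        have hinner : (∑ f : Sym2 V, if f ∈ F ∧ 0 < π s(u, v) f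
              then we f * π s(u, v) f * D f else 0)
            = ∑ f ∈ p.edges.toFinset, we f * π s(u, v) f * D f := by
          rw [← Finset.sum_filter, hfil]
        rw [hgdef]
        dsimp only
        rw [if_pos hEuv, hwdil, hinner]
        calc w u v * (x u - x v)^2
            = w u v * (∑ d ∈ p.darts.toFinset, (x d.toProd.1 - x d.toProd.2))^2 := by
              rw [htel]
          _ ≤ w u v * ((∑ d ∈ p.darts.toFinset, 1 / (we d.edge * π s(u, v) d.edge)) *
                (∑ d ∈ p.darts.toFinset, (we d.edge * π s(u, v) d.edge) * D d.edge)) :=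
              mul_le_mul_of_nonneg_left hCS (hw.nonneg u v)
          _ = (w u v * ∑ f ∈ p.edges.toFinset, 1 / (we f * π s(u, v) f)) *
                (∑ f ∈ p.edges.toFinset, we f * π s(u, v) f * D f) := by
              rw [hsum1, hsum2, ← mul_assoc]
      · have h0 : w u v = 0 := le_antisymm (not_lt.mp hpos) (hw.nonneg u v)
        rw [h0, zero_mul]
        exact hg0 _
    have step1 : x ⬝ᵥ (lap w *ᵥ x) ≤ ∑ e : Sym2 V, g e := by
      rw [lap_quad hw x, half_sum_sym2 g hgdiag]
      have hle : ∑ u, ∑ v, w u v * (x u - x v)^2 ≤ ∑ u, ∑ v, g s(u, v) :=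
        Finset.sum_le_sum (fun u _ => Finset.sum_le_sum (fun v _ => claimA u v))
      linarith
    have step2 : ∑ e : Sym2 V, g e
        = ∑ f : Sym2 V, wcong we (edgeSetW w) F π f * (we f * D f) := by
      have hper : ∀ e : Sym2 V, g e = ∑ f : Sym2 V,
          (if e ∈ edgeSetW w ∧ f ∈ F ∧ 0 < π e f
            then (wdil we F π e * π e f) * (we f * D f) else 0) := by
        intro e
        rw [hgdef]
        dsimp only
        by_cases hE : e ∈ edgeSetW w
        · rw [if_pos hE, Finset.mul_sum]
          refine Finset.sum_congr rfl (fun f _ => ?_)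
          by_cases hfF : f ∈ F ∧ 0 < π e f
          · rw [if_pos hfF, if_pos ⟨hE, hfF⟩]; ring
          · rw [if_neg hfF, if_neg (by tauto), mul_zero]
        · rw [if_neg hE]
          symm
          apply Finset.sum_eq_zero
          intro f _
          rw [if_neg (by tauto)]
      rw [Finset.sum_congr rfl (fun e _ => hper e), Finset.sum_comm]
      refine Finset.sum_congr rfl (fun f _ => ?_)
      unfold wcong
      rw [Finset.sum_mul]
      refine Finset.sum_congr rfl (fun e _ => ?_)
      by_cases hc : e ∈ edgeSetW w ∧ f ∈ F ∧ 0 < π e f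
      · rw [if_pos hc, if_pos hc]
      · rw [if_neg hc, if_neg hc, zero_mul]
    have step3 : ∑ f : Sym2 V, wcong we (edgeSetW w) F π f * (we f * D f)
        ≤ ∑ f : Sym2 V, (if f ∈ F then C * (we f * D f) else 0) := by
      apply Finset.sum_le_sum
      intro f _
      by_cases hfF : f ∈ F
      · rw [if_pos hfF]
        exact mul_le_mul_of_nonneg_right (hCle f hfF) (mul_nonneg (hwe_nonneg f) (hD0 f))
      · rw [if_neg hfF]
        have hz : wcong we (edgeSetW w) F π f = 0 := by
          unfold wcong
          apply Finset.sum_eq_zero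
          intro e _
          rw [if_neg (by tauto)]
        rw [hz, zero_mul]
    have step4 : ∑ f : Sym2 V, (if f ∈ F then C * (we f * D f) else 0)
        = C * (x ⬝ᵥ (lap (restrictW w F) *ᵥ x)) := by
      have hgF : ∀ v : V, (fun f : Sym2 V => if f ∈ F then we f * D f else 0) s(v, v) = 0 := by
        intro v
        dsimp only
        split
        · rw [hwe, hw.diag, zero_mul]
        · rfl
      have h5 : ∀ u v : V, (if s(u, v) ∈ F then we s(u, v) * D s(u, v) else 0)
          = restrictW w F u v * (x u - x v)^2 := by
        intro u v
        unfold restrictW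
        by_cases h : s(u, v) ∈ F
        · rw [if_pos h, if_pos h, hwe, hD]
        · rw [if_neg h, if_neg h, zero_mul]
      calc ∑ f : Sym2 V, (if f ∈ F then C * (we f * D f) else 0)
          = C * ∑ f : Sym2 V, (if f ∈ F then we f * D f else 0) := by
            rw [Finset.mul_sum]
            refine Finset.sum_congr rfl (fun f _ => ?_)
            rw [mul_ite, mul_zero]
        _ = C * ((1/2) * ∑ u, ∑ v, (if s(u, v) ∈ F then we s(u, v) * D s(u, v) else 0)) := by
            rw [half_sum_sym2 (fun f => if f ∈ F then we f * D f else 0) hgF]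
        _ = C * ((1/2) * ∑ u, ∑ v, restrictW w F u v * (x u - x v)^2) := by
            congr 1
            congr 1
            exact Finset.sum_congr rfl (fun u _ => Finset.sum_congr rfl (fun v _ => h5 u v))
        _ = C * (x ⬝ᵥ (lap (restrictW w F) *ᵥ x)) := by rw [lap_quad hBw x]
    calc x ⬝ᵥ (lap w *ᵥ x) ≤ ∑ e : Sym2 V, g e := step1
      _ = ∑ f : Sym2 V, wcong we (edgeSetW w) F π f * (we f * D f) := step2
      _ ≤ ∑ f : Sym2 V, (if f ∈ F then C * (we f * D f) else 0) := step3
      _ = C * (x ⬝ᵥ (lap (restrictW w F) *ᵥ x)) := step4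
  -- assemble
  have hBle : ∀ x : V → ℝ, x ⬝ᵥ (lap (restrictW w F) *ᵥ x) ≤ x ⬝ᵥ (lap w *ᵥ x) := by
    intro x
    rw [lap_quad hw x, lap_quad hBw x]
    have hterm : ∀ u v : V, restrictW w F u v * (x u - x v)^2 ≤ w u v * (x u - x v)^2 := by
      intro u v
      apply mul_le_mul_of_nonneg_right _ (sq_nonneg _)
      unfold restrictW
      split
      · exact le_refl _
      · exact hw.nonneg u v
    have := Finset.sum_le_sum (fun u (_ : u ∈ (univ : Finset V)) =>
      Finset.sum_le_sum (fun v (_ : v ∈ (univ : Finset V)) => hterm u v))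
    linarith
  unfold kappaF
  have h1 : sSup {r | ∃ x : V → ℝ, lap w *ᵥ x ≠ 0 ∧
      r = (x ⬝ᵥ (lap w *ᵥ x)) / (x ⬝ᵥ (lap (restrictW w F) *ᵥ x))} ≤ C := by
    apply Real.sSup_le _ hC0
    rintro r ⟨x, hx, rfl⟩
    have hA := lap_quad_pos hw hx
    have hBpos : 0 < x ⬝ᵥ (lap (restrictW w F) *ᵥ x) := by
      rcases (lap_quad_nonneg hBw x).eq_or_lt with h | h
      · exfalso
        have := hmain x
        rw [← h, mul_zero] at this
        linarith
      · exact h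
    rw [div_le_iff₀ hBpos]
    exact hmain x
  have h2 : sSup {r | ∃ x : V → ℝ, lap w *ᵥ x ≠ 0 ∧
      r = (x ⬝ᵥ (lap (restrictW w F) *ᵥ x)) / (x ⬝ᵥ (lap w *ᵥ x))} ≤ 1 := by
    apply Real.sSup_le _ zero_le_one
    rintro r ⟨x, hx, rfl⟩
    rw [div_le_one (lap_quad_pos hw hx)]
    exact hBle x
  have h2' : 0 ≤ sSup {r | ∃ x : V → ℝ, lap w *ᵥ x ≠ 0 ∧
      r = (x ⬝ᵥ (lap (restrictW w F) *ᵥ x)) / (x ⬝ᵥ (lap w *ᵥ x))} := by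
    apply Real.sSup_nonneg
    rintro r ⟨x, hx, rfl⟩
    exact div_nonneg (lap_quad_nonneg hBw x) (lap_quad_nonneg hw x)
  calc sSup {r | ∃ x : V → ℝ, lap w *ᵥ x ≠ 0 ∧
        r = (x ⬝ᵥ (lap w *ᵥ x)) / (x ⬝ᵥ (lap (restrictW w F) *ᵥ x))} *
      sSup {r | ∃ x : V → ℝ, lap w *ᵥ x ≠ 0 ∧
        r = (x ⬝ᵥ (lap (restrictW w F) *ᵥ x)) / (x ⬝ᵥ (lap w *ᵥ x))}
      ≤ C * 1 := mul_le_mul h1 h2 h2' hC0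
    _ = C := mul_one C
end
end

section
/- Let ρ ≥ 1 be an integer and y ≥ 1 a real number, and for integers j ≥ l ≥ 1 define τ(j,l) = 1 if j − l < ρ, and τ(j,l) = (j − l − ρ + 1)² / y^{j−l−ρ+1} otherwise. Then for every integer j ≥ 1, Σ_{l=1}^{j} ( y^l · min(y^{j−l+1}, y^ρ) ) / τ(j,l) ≤ (ρ + 2) · y^{j+1}. -/
open Finset

noncomputable section

/-- The weight function `τ(j,l)` used in the analysis of the preconditioner:
`τ(j,l) = 1` if `j − l < ρ`, and `(j−l−ρ+1)²/y^{j−l−ρ+1}` otherwise. -/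
def tauF (ρ : ℕ) (y : ℝ) (j l : ℕ) : ℝ :=
  if j - l < ρ then 1 else ((j - l - ρ + 1 : ℕ) : ℝ) ^ 2 / y ^ (j - l - ρ + 1)

lemma sum_inv_sq_le (m : ℕ) (hm : 1 ≤ m) :
    ∑ k ∈ Finset.Icc 1 m, (1 : ℝ) / (k : ℝ) ^ 2 ≤ 2 - 1 / (m : ℝ) := by
  induction m, hm using Nat.le_induction with
  | base => norm_num
  | succ m hm ih =>
    rw [Finset.sum_Icc_succ_top (Nat.le_add_left 1 m)]
    have hm0 : (1:ℝ) ≤ (m:ℝ) := by exact_mod_cast hm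
    have hm1 : (0:ℝ) < (m:ℝ) + 1 := by positivity
    have key : (1:ℝ) / ((m:ℝ) + 1) ^ 2 ≤ 1 / (m:ℝ) - 1 / ((m:ℝ) + 1) := by
      rw [div_sub_div _ _ (by positivity) (ne_of_gt hm1),
        div_le_div_iff₀ (by positivity) (by positivity)]
      nlinarith
    push_cast
    push_cast at ih
    nlinarith [key, ih]

/-- For every `j ≥ 1`,
`Σ_{l=1}^{j} (y^l · min(y^{j−l+1}, y^ρ)) / τ(j,l) ≤ (ρ+2)·y^{j+1}`. -/
theorem tau_bound_a (ρ : ℕ) (hρ : 1 ≤ ρ) (y : ℝ) (hy : 1 ≤ y) (j : ℕ) (hj : 1 ≤ j) :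
    ∑ l ∈ Finset.Icc 1 j,
        (y ^ l * min (y ^ (j - l + 1)) (y ^ ρ)) / tauF ρ y j l
      ≤ ((ρ : ℝ) + 2) * y ^ (j + 1) := by
  have hy0 : (0:ℝ) < y := lt_of_lt_of_le one_pos hy
  set f : ℕ → ℝ := fun l => if j - l < ρ then 1 else 1 / ((j - l - ρ + 1 : ℕ) : ℝ) ^ 2 with hf
  have hterm : ∀ l ∈ Finset.Icc 1 j,
      (y ^ l * min (y ^ (j - l + 1)) (y ^ ρ)) / tauF ρ y j l = y ^ (j + 1) * f l := by
    intro l hl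
    rw [Finset.mem_Icc] at hl
    unfold tauF
    simp only [hf]
    by_cases h : j - l < ρ
    · rw [if_pos h, if_pos h, div_one, mul_one,
        min_eq_left (pow_le_pow_right₀ hy (by omega)), ← pow_add]
      congr 1
      omega
    · have hk : 1 ≤ j - l - ρ + 1 := by omega
      have hkpos : (0:ℝ) < ((j - l - ρ + 1 : ℕ) : ℝ) := by positivity
      rw [if_neg h, if_neg h,
        min_eq_right (pow_le_pow_right₀ hy (by omega)), div_div_eq_mul_div,
        ← pow_add, ← pow_add]
      rw [show l + ρ + (j - l - ρ + 1) = j + 1 by omega, mul_one_div]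
  rw [Finset.sum_congr rfl hterm, ← Finset.mul_sum]
  rw [mul_comm]
  apply mul_le_mul_of_nonneg_right _ (by positivity)
  -- now: ∑ f ≤ ρ + 2
  rw [← Finset.sum_filter_add_sum_filter_not (Finset.Icc 1 j) (fun l => j - l < ρ)]
  have h1 : ∑ l ∈ (Finset.Icc 1 j).filter (fun l => j - l < ρ), f l ≤ (ρ : ℝ) := by
    have heq : ∀ l ∈ (Finset.Icc 1 j).filter (fun l => j - l < ρ), f l = 1 := by
      intro l hl
      rw [Finset.mem_filter] at hl
      simp [hf, hl.2]
    rw [Finset.sum_congr rfl heq, Finset.sum_const, nsmul_eq_mul, mul_one]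
    have hsub : (Finset.Icc 1 j).filter (fun l => j - l < ρ) ⊆ Finset.Icc (j + 1 - ρ) j := by
      intro l hl
      simp only [Finset.mem_filter, Finset.mem_Icc] at hl ⊢
      omega
    have hc := Finset.card_le_card hsub
    rw [Nat.card_Icc] at hc
    have : ((Finset.Icc 1 j).filter (fun l => j - l < ρ)).card ≤ ρ := by omega
    exact_mod_cast this
  have h2 : ∑ l ∈ (Finset.Icc 1 j).filter (fun l => ¬ j - l < ρ), f l ≤ 2 := by
    have hset : (Finset.Icc 1 j).filter (fun l => ¬ j - l < ρ) = Finset.Icc 1 (j - ρ) := by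
      ext l
      simp only [Finset.mem_filter, Finset.mem_Icc]
      omega
    rw [hset]
    set m := j - ρ with hm
    have hre : ∑ l ∈ Finset.Icc 1 m, f l
        = ∑ k ∈ Finset.Icc 1 m, (1:ℝ) / (k : ℝ) ^ 2 := by
      apply Finset.sum_nbij' (i := fun l => m + 1 - l) (j := fun k => m + 1 - k)
      · intro a ha; rw [Finset.mem_Icc] at ha ⊢; omega
      · intro a ha; rw [Finset.mem_Icc] at ha ⊢; omega
      · intro a ha; rw [Finset.mem_Icc] at ha; omega
      · intro a ha; rw [Finset.mem_Icc] at ha; omega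
      · intro a ha
        rw [Finset.mem_Icc] at ha
        simp only [hf]
        rw [if_neg (by omega)]
        have : j - a - ρ + 1 = m + 1 - a := by omega
        rw [this]
    rw [hre]
    rcases Nat.eq_zero_or_pos m with h0 | h0
    · rw [h0]; simp
    · calc ∑ k ∈ Finset.Icc 1 m, (1:ℝ) / (k : ℝ) ^ 2 ≤ 2 - 1 / (m : ℝ) := sum_inv_sq_le m h0
        _ ≤ 2 := by
          have hm0 : (0:ℝ) < (m:ℝ) := by exact_mod_cast h0
          have : (0:ℝ) ≤ 1 / (m:ℝ) := by positivity
          linarith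
  linarith
end
end

section
/- Let ρ ≥ 1 be an integer and y > 1 a real number satisfying y³ − 4y² + 2y − 1 ≥ 0, and for integers j ≥ l ≥ 1 define τ(j,l) = 1 if j − l < ρ, and τ(j,l) = (j − l − ρ + 1)² / y^{j−l−ρ+1} otherwise. Then for every integer l ≥ 1, the series Σ_{j ≥ l} τ(j,l) converges and Σ_{j ≥ l} τ(j,l) ≤ ρ + 1. -/
open Finset

noncomputable section

/-- For every `l ≥ 1`, the series `Σ_{j ≥ l} τ(j,l)` converges and is at most `ρ + 1`,
provided `y > 1` satisfies `y³ − 4y² + 2y − 1 ≥ 0`. -/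
theorem tau_bound_b (ρ : ℕ) (hρ : 1 ≤ ρ) (y : ℝ) (hy : 1 < y)
    (hcubic : 0 ≤ y ^ 3 - 4 * y ^ 2 + 2 * y - 1) (l : ℕ) (hl : 1 ≤ l) :
    Summable (fun j : ℕ => if l ≤ j then tauF ρ y j l else 0) ∧
      ∑' j : ℕ, (if l ≤ j then tauF ρ y j l else 0) ≤ (ρ : ℝ) + 1 := by
  set f : ℕ → ℝ := fun j => if l ≤ j then tauF ρ y j l else 0 with hf
  have hy0 : (0:ℝ) < y := lt_trans one_pos hy
  have hy' : y ≠ 0 := ne_of_gt hy0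
  set r : ℝ := 1 / y with hr
  have hr0 : 0 < r := by positivity
  have hr1 : r < 1 := by rw [hr, div_lt_one hy0]; exact hy
  have hrn : ‖r‖ < 1 := by rw [Real.norm_eq_abs, abs_of_pos hr0]; exact hr1
  have h2 := hasSum_choose_mul_geometric_of_norm_lt_one 2 hrn (𝕜 := ℝ)
  have h1 := hasSum_choose_mul_geometric_of_norm_lt_one 1 hrn (𝕜 := ℝ)
  set T : ℝ := r * (2 * (1 / (1 - r) ^ (2 + 1)) - 1 / (1 - r) ^ (1 + 1)) with hT
  have hS : HasSum (fun n : ℕ => ((n : ℝ) + 1) ^ 2 * r ^ n)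
      (2 * (1 / (1 - r) ^ (2 + 1)) - 1 / (1 - r) ^ (1 + 1)) := by
    have e : (fun n : ℕ => ((n : ℝ) + 1) ^ 2 * r ^ n)
        = fun n : ℕ => 2 * ((((n + 2).choose 2 : ℕ) : ℝ) * r ^ n)
            - (((n + 1).choose 1 : ℕ) : ℝ) * r ^ n := by
      funext n
      rw [Nat.choose_one_right, Nat.cast_choose_two]
      push_cast
      ring
    rw [e]
    exact (h2.mul_left 2).sub h1
  have hb : HasSum (fun m : ℕ => ((m : ℝ) + 1) ^ 2 / y ^ (m + 1)) T := by
    have h := hS.mul_left r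
    have e : (fun n : ℕ => r * (((n : ℝ) + 1) ^ 2 * r ^ n))
        = fun m : ℕ => ((m : ℝ) + 1) ^ 2 / y ^ (m + 1) := by
      funext n
      rw [hr]
      field_simp
      rw [one_div, inv_pow, pow_succ, ← mul_assoc, inv_mul_cancel₀ (pow_ne_zero _ hy'), one_mul]
    rwa [e] at h
  have h1r : (0:ℝ) < 1 - r := by linarith
  have hT1 : T ≤ 1 := by
    have key : r ^ 3 * (y ^ 3 - 4 * y ^ 2 + 2 * y - 1)
        = 1 - 4 * r + 2 * r ^ 2 - r ^ 3 := by
      rw [hr]; field_simp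
    have hcub' : 0 ≤ 1 - 4 * r + 2 * r ^ 2 - r ^ 3 := by
      rw [← key]; exact mul_nonneg (pow_nonneg hr0.le 3) hcubic
    have hTeq : T = r * (1 + r) / (1 - r) ^ 3 := by
      rw [hT]; field_simp; ring
    rw [hTeq, div_le_one (pow_pos h1r 3)]
    nlinarith [hcub']
  -- the tail of the series, shifted by ρ
  have hg : HasSum (fun n : ℕ => f (n + l)) (T + ∑ i ∈ range ρ, f (i + l)) := by
    have e1 : (fun m : ℕ => f (m + ρ + l)) = fun m : ℕ => ((m : ℝ) + 1) ^ 2 / y ^ (m + 1) := by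
      funext m
      have h1 : l ≤ m + ρ + l := Nat.le_add_left _ _
      have h2 : m + ρ + l - l = m + ρ := by omega
      simp only [hf, if_pos h1, tauF, h2]
      rw [if_neg (by omega)]
      have h3 : m + ρ - ρ + 1 = m + 1 := by omega
      rw [h3]
      push_cast
      ring
    have hb' : HasSum (fun m : ℕ => f (m + ρ + l)) T := by rw [e1]; exact hb
    have := (hasSum_nat_add_iff (f := fun n => f (n + l)) ρ).mp
      hb'
    exact this
  have hsum_range : ∑ i ∈ range ρ, f (i + l) = (ρ : ℝ) := by
    rw [Finset.sum_congr rfl (fun i hi => ?_), Finset.sum_const, card_range, nsmul_eq_mul,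
      mul_one]
    have h1 : l ≤ i + l := Nat.le_add_left _ _
    have h2 : i + l - l = i := by omega
    simp only [Finset.mem_range] at hi
    simp only [hf, if_pos h1, tauF, h2, if_pos hi]
  have hF : HasSum f (T + (ρ : ℝ) + ∑ i ∈ range l, f i) := by
    have := (hasSum_nat_add_iff (f := f) l).mp hg
    rwa [hsum_range] at this
  have hzero : ∑ i ∈ range l, f i = 0 := by
    apply Finset.sum_eq_zero
    intro i hi
    simp only [Finset.mem_range] at hi
    simp [hf, Nat.not_le.mpr hi]
  rw [hzero, add_zero] at hF
  exact ⟨hF.summable, by rw [hF.tsum_eq]; linarith⟩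
end
end

section
/- Let L be a real n×n lower-triangular matrix with L_{jj} = 1 for all j that is column diagonally dominant, i.e. Σ_{i ≠ j} |L_{ij}| ≤ 1 for every column j. Then L is invertible and its condition number satisfies κ(L) = ‖L‖ · ‖L⁻¹‖ ≤ 2 n^{3/2}, where ‖·‖ denotes the operator norm induced by the Euclidean norm on ℝⁿ. -/
open Matrix Finset

noncomputable section

lemma opnorm_le_frob {n : ℕ} (A : Matrix (Fin n) (Fin n) ℝ) :
    ‖Matrix.toEuclideanCLM (𝕜 := ℝ) A‖ ≤ Real.sqrt (∑ i, ∑ j, (A i j) ^ 2) := by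
  apply ContinuousLinearMap.opNorm_le_bound _ (Real.sqrt_nonneg _)
  intro x
  have hx : ∀ i, (Matrix.toEuclideanCLM (𝕜 := ℝ) A x) i = ∑ j, A i j * x j := by
    intro i
    rfl
  rw [EuclideanSpace.norm_eq, EuclideanSpace.norm_eq]
  simp only [hx, Real.norm_eq_abs, sq_abs]
  rw [← Real.sqrt_mul (by positivity)]
  apply Real.sqrt_le_sqrt
  rw [Finset.sum_mul]
  apply Finset.sum_le_sum
  intro i _
  exact Finset.sum_mul_sq_le_sq_mul_sq _ _ _

lemma inv_entry_le {n : ℕ} (L : Matrix (Fin n) (Fin n) ℝ)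
    (hlow : ∀ i j : Fin n, i < j → L i j = 0)
    (hdiag : ∀ j : Fin n, L j j = 1)
    (hdd : ∀ j : Fin n, ∑ i ∈ Finset.univ.erase j, |L i j| ≤ 1) :
    ∀ i j : Fin n, |L⁻¹ i j| ≤ 1 := by
  have hbt : L.BlockTriangular OrderDual.toDual := fun i j h => hlow i j h
  have hdet : L.det = 1 := by
    rw [Matrix.det_of_lowerTriangular L hbt]
    simp [hdiag]
  have hu : IsUnit L.det := by rw [hdet]; exact isUnit_one
  haveI : Invertible L := L.invertibleOfIsUnitDet hu
  have hMlow : ∀ i j : Fin n, i < j → L⁻¹ i j = 0 :=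
    fun i j h => Matrix.blockTriangular_inv_of_blockTriangular hbt h
  have hmul : L * L⁻¹ = 1 := Matrix.mul_nonsing_inv L hu
  set M := L⁻¹ with hM
  have hent : ∀ i j : Fin n, ∑ k, L i k * M k j = if i = j then 1 else 0 := by
    intro i j
    have := congrFun (congrFun hmul i) j
    simpa [Matrix.mul_apply, Matrix.one_apply] using this
  have hMdiag : ∀ j : Fin n, M j j = 1 := by
    intro j
    have h := hent j j
    rw [Finset.sum_eq_single j] at h
    · simpa [hdiag] using h
    · intro k _ hk
      rcases lt_or_gt_of_ne hk with h1 | h1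
      · rw [hMlow k j h1, mul_zero]
      · rw [hlow j k h1, zero_mul]
    · simp
  intro i₀ j
  -- fix the column j
  set x : Fin n → ℝ := fun i => M i j with hxdef
  set c : Fin n → Fin n → ℝ := fun k m => ∑ i' ∈ Finset.Ioi m, |L i' k| with hcdef
  set S : Fin n → ℝ := fun m => ∑ k ∈ Finset.Icc j m, |x k| * c k m with hSdef
  have hcnonneg : ∀ k m, 0 ≤ c k m := fun k m => Finset.sum_nonneg fun _ _ => abs_nonneg _
  have hcle : ∀ k, c k k ≤ 1 := by
    intro k
    refine le_trans ?_ (hdd k)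
    apply Finset.sum_le_sum_of_subset_of_nonneg
    · intro i' hi'
      simp only [Finset.mem_Ioi] at hi'
      exact Finset.mem_erase.2 ⟨ne_of_gt hi', Finset.mem_univ _⟩
    · intro _ _ _; exact abs_nonneg _
  have main : ∀ N : ℕ, ∀ i : Fin n, (i : ℕ) = N → |x i| ≤ 1 ∧ (j ≤ i → S i ≤ 1) := by
    intro N
    induction N using Nat.strong_induction_on with
    | _ N ih =>
      intro i hiN
      rcases lt_trichotomy i j with hij | rfl | hij
      · constructor
        · rw [show x i = 0 from hMlow i j hij]; simp
        · intro h; exact absurd h (not_le.2 hij)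
      · constructor
        · rw [show x i = 1 from hMdiag i]; simp
        · intro _
          have : S i = c i i := by
            simp only [hSdef, Finset.Icc_self, Finset.sum_singleton,
              show x i = 1 from hMdiag i, abs_one, one_mul]
          rw [this]; exact hcle i
      · -- j < i
        have h1 : 1 ≤ (i : ℕ) := by
          have := hij
          rw [Fin.lt_def] at this
          omega
        set m : Fin n := ⟨(i : ℕ) - 1, by omega⟩ with hmdef
        have hmval : (m : ℕ) = (i : ℕ) - 1 := rfl
        have hmi : m < i := by rw [Fin.lt_def]; omega
        have hjm : j ≤ m := by
          rw [Fin.le_def]; rw [Fin.lt_def] at hij; omega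
        have hSm : S m ≤ 1 := (ih (m : ℕ) (by omega) m rfl).2 hjm
        -- Ioi m = insert i (Ioi i)
        have hIoi : Finset.Ioi m = insert i (Finset.Ioi i) := by
          ext k
          simp only [Finset.mem_Ioi, Finset.mem_insert, Fin.lt_def, Fin.ext_iff]
          omega
        have hinotIoi : i ∉ Finset.Ioi i := by simp
        have hckm : ∀ k, c k m = |L i k| + c k i := by
          intro k
          simp only [hcdef, hIoi, Finset.sum_insert hinotIoi]
        -- Ico j i = Icc j m
        have hIco : Finset.Ico j i = Finset.Icc j m := by
          ext k
          simp only [Finset.mem_Ico, Finset.mem_Icc, Fin.lt_def, Fin.le_def]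
          omega
        -- recurrence
        have hrec : x i + ∑ k ∈ Finset.Icc j m, L i k * x k = 0 := by
          have h0 := hent i j
          rw [if_neg (ne_of_gt hij)] at h0
          have hsplit : ∑ k, L i k * x k = ∑ k ∈ Finset.Icc j i, L i k * x k := by
            symm
            apply Finset.sum_subset (Finset.subset_univ _)
            intro k _ hk
            simp only [Finset.mem_Icc, not_and_or, not_le] at hk
            rcases hk with hk | hk
            · rw [show x k = 0 from hMlow k j hk, mul_zero]
            · rw [hlow i k hk, zero_mul]
          have hins : Finset.Icc j i = insert i (Finset.Icc j m) := by
            ext k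
            simp only [Finset.mem_Icc, Finset.mem_insert, Fin.le_def, Fin.ext_iff]
            omega
          have hinot : i ∉ Finset.Icc j m := by
            simp only [Finset.mem_Icc, Fin.le_def, hmdef]
            omega
          have := h0
          rw [hsplit, hins, Finset.sum_insert hinot, hdiag i, one_mul] at this
          exact this
        have hxi : |x i| ≤ ∑ k ∈ Finset.Icc j m, |x k| * |L i k| := by
          have : x i = -∑ k ∈ Finset.Icc j m, L i k * x k := by linarith
          rw [this, abs_neg]
          refine (Finset.abs_sum_le_sum_abs _ _).trans ?_
          apply Finset.sum_le_sum
          intro k _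
          rw [abs_mul, mul_comm]
        have hLc : ∀ k, |L i k| ≤ c k m := by
          intro k
          rw [hckm k]
          have := hcnonneg k i
          linarith
        have hxi1 : |x i| ≤ S m := by
          refine hxi.trans ?_
          apply Finset.sum_le_sum
          intro k _
          exact mul_le_mul_of_nonneg_left (hLc k) (abs_nonneg _)
        refine ⟨hxi1.trans hSm, fun _ => ?_⟩
        -- S i bound
        have hinot : i ∉ Finset.Icc j m := by
          simp only [Finset.mem_Icc, Fin.le_def, hmdef]
          omega
        have hins : Finset.Icc j i = insert i (Finset.Icc j m) := by
          ext k
          simp only [Finset.mem_Icc, Finset.mem_insert, Fin.le_def, Fin.ext_iff]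
          omega
        have hSi : S i = (∑ k ∈ Finset.Icc j m, |x k| * c k i) + |x i| * c i i := by
          simp only [hSdef, hins, Finset.sum_insert hinot]
          ring
        have hsum : ∑ k ∈ Finset.Icc j m, |x k| * c k i
            = S m - ∑ k ∈ Finset.Icc j m, |x k| * |L i k| := by
          simp only [hSdef, ← Finset.sum_sub_distrib]
          apply Finset.sum_congr rfl
          intro k _
          rw [hckm k]
          ring
        have hxci : |x i| * c i i ≤ |x i| := by
          have := hcle i
          nlinarith [abs_nonneg (x i), hcnonneg i i]
        rw [hSi, hsum]
        linarith
  exact (main (i₀ : ℕ) i₀ rfl).1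

/-- A unit lower-triangular, column diagonally-dominant real matrix is invertible and its
spectral condition number `κ(L) = ‖L‖·‖L⁻¹‖` is at most `2·n^{3/2}`. Here the norm is the
operator norm induced by the Euclidean norm, obtained via `Matrix.toEuclideanCLM`. -/
theorem condition_number_of_unit_lower_triangular (n : ℕ)
    (L : Matrix (Fin n) (Fin n) ℝ)
    (hlow : ∀ i j : Fin n, i < j → L i j = 0)
    (hdiag : ∀ j : Fin n, L j j = 1)
    (hdd : ∀ j : Fin n, ∑ i ∈ Finset.univ.erase j, |L i j| ≤ 1) :
    IsUnit L ∧
      ‖Matrix.toEuclideanCLM (𝕜 := ℝ) L‖ * ‖Matrix.toEuclideanCLM (𝕜 := ℝ) L⁻¹‖ ≤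
        2 * (n : ℝ) ^ ((3 : ℝ) / 2) := by
  have hbt : L.BlockTriangular OrderDual.toDual := fun i j h => hlow i j h
  have hdet : L.det = 1 := by
    rw [Matrix.det_of_lowerTriangular L hbt]
    simp [hdiag]
  have hu : IsUnit L.det := by rw [hdet]; exact isUnit_one
  refine ⟨(Matrix.isUnit_iff_isUnit_det L).2 hu, ?_⟩
  -- entries of L bounded by 1
  have habs : ∀ i j : Fin n, |L i j| ≤ 1 := by
    intro i j
    rcases eq_or_ne i j with rfl | h
    · rw [hdiag i]; simp
    · refine le_trans ?_ (hdd j)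
      exact Finset.single_le_sum (f := fun i => |L i j|) (fun _ _ => abs_nonneg _)
        (Finset.mem_erase.2 ⟨h, Finset.mem_univ _⟩)
  -- Frobenius bound for L
  have frobL : ∑ i, ∑ j, (L i j) ^ 2 ≤ 2 * n := by
    rw [Finset.sum_comm]
    calc ∑ j, ∑ i, (L i j) ^ 2 ≤ ∑ _j : Fin n, (2 : ℝ) := by
          apply Finset.sum_le_sum
          intro j _
          rw [← Finset.add_sum_erase _ _ (Finset.mem_univ j), hdiag j, one_pow]
          have : ∑ i ∈ Finset.univ.erase j, (L i j) ^ 2 ≤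
              ∑ i ∈ Finset.univ.erase j, |L i j| := by
            apply Finset.sum_le_sum
            intro i _
            have h1 := habs i j
            have h2 := abs_nonneg (L i j)
            nlinarith [sq_abs (L i j)]
          have := hdd j
          linarith
      _ = 2 * n := by simp [mul_comm]
  have hnormL : ‖Matrix.toEuclideanCLM (𝕜 := ℝ) L‖ ≤ Real.sqrt (2 * n) :=
    (opnorm_le_frob L).trans (Real.sqrt_le_sqrt frobL)
  -- Frobenius bound for L⁻¹
  have hMabs := inv_entry_le L hlow hdiag hdd
  have frobM : ∑ i, ∑ j, (L⁻¹ i j) ^ 2 ≤ (n : ℝ) ^ 2 := by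
    calc ∑ i, ∑ j, (L⁻¹ i j) ^ 2 ≤ ∑ _i : Fin n, ∑ _j : Fin n, (1 : ℝ) := by
          apply Finset.sum_le_sum
          intro i _
          apply Finset.sum_le_sum
          intro j _
          have h1 := hMabs i j
          nlinarith [sq_abs (L⁻¹ i j), abs_nonneg (L⁻¹ i j)]
      _ = (n : ℝ) ^ 2 := by simp [sq]
  have hnormM : ‖Matrix.toEuclideanCLM (𝕜 := ℝ) L⁻¹‖ ≤ n := by
    refine (opnorm_le_frob L⁻¹).trans ?_
    rw [show ((n : ℝ)) = Real.sqrt ((n : ℝ) ^ 2) from (Real.sqrt_sq (Nat.cast_nonneg n)).symm]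
    exact Real.sqrt_le_sqrt frobM
  have hprod : ‖Matrix.toEuclideanCLM (𝕜 := ℝ) L‖ * ‖Matrix.toEuclideanCLM (𝕜 := ℝ) L⁻¹‖ ≤
      Real.sqrt (2 * n) * n :=
    mul_le_mul hnormL hnormM (norm_nonneg _) (Real.sqrt_nonneg _)
  refine hprod.trans ?_
  -- arithmetic: √(2n)·n ≤ 2·n^{3/2}
  have h3 : (n : ℝ) ^ ((3 : ℝ) / 2) = Real.sqrt ((n : ℝ) ^ 3) := by
    rw [Real.sqrt_eq_rpow, ← Real.rpow_natCast (n : ℝ) 3, ← Real.rpow_mul (Nat.cast_nonneg n)]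
    norm_num
  rw [h3]
  have h4 : Real.sqrt (2 * (n : ℝ) ^ 3) = Real.sqrt (2 * n) * n := by
    rw [show (2 * (n : ℝ) ^ 3) = (2 * n) * (n : ℝ) ^ 2 by ring, Real.sqrt_mul (by positivity),
      Real.sqrt_sq (Nat.cast_nonneg n)]
  rw [← h4]
  have h5 : (2 : ℝ) * Real.sqrt ((n : ℝ) ^ 3) = Real.sqrt (4 * (n : ℝ) ^ 3) := by
    rw [Real.sqrt_mul (by norm_num), show (4 : ℝ) = 2 ^ 2 by norm_num,
      Real.sqrt_sq (by norm_num)]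
  rw [h5]
  apply Real.sqrt_le_sqrt
  nlinarith [pow_nonneg (Nat.cast_nonneg (α := ℝ) n) 3]
end
end

section
/- Let L be an invertible real n×n matrix and C a nonzero symmetric positive semidefinite real n×n matrix, and set B = L C Lᵀ. Let ε ≥ 0, let c be a vector in the column span of B, let s be a vector in the column span of C with C s = L⁻¹ c, let s̃ be a vector with ‖s − s̃‖ ≤ ε ‖s‖, and let ỹ be the solution of Lᵀ ỹ = s̃. Then ‖c − B ỹ‖ ≤ ε · κ(L) · κ_f(C) · ‖c‖, where κ(L) = ‖L‖·‖L⁻¹‖ and ‖·‖ is the Euclidean norm and its induced operator norm. -/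
open Matrix Finset

noncomputable section

/-- The Euclidean norm of a vector in `ℝⁿ`. -/
def enorm2 {n : ℕ} (v : Fin n → ℝ) : ℝ := Real.sqrt (∑ i, v i ^ 2)

/-- `κ_f(C)` for a Hermitian matrix `C`: the ratio of its largest eigenvalue to its
smallest nonzero eigenvalue. -/
def kappaSingle {n : ℕ} (C : Matrix (Fin n) (Fin n) ℝ) (hC : C.IsHermitian) : ℝ :=
  (⨆ i, hC.eigenvalues i) / sInf {r : ℝ | (∃ i, hC.eigenvalues i = r) ∧ r ≠ 0}

/-- `κ(L) = ‖L‖·‖L⁻¹‖`, the spectral condition number of `L`. -/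
def kappaMat {n : ℕ} (L : Matrix (Fin n) (Fin n) ℝ) : ℝ :=
  ‖Matrix.toEuclideanCLM (𝕜 := ℝ) L‖ * ‖Matrix.toEuclideanCLM (𝕜 := ℝ) L⁻¹‖

namespace ApxAux

variable {n : ℕ}

lemma enorm_eq (v : Fin n → ℝ) :
    enorm2 v = ‖((WithLp.equiv 2 (Fin n → ℝ)).symm v : EuclideanSpace ℝ (Fin n))‖ := by
  rw [EuclideanSpace.norm_eq]
  simp [enorm2, sq_abs]

lemma clm_apply (M : Matrix (Fin n) (Fin n) ℝ) (v : Fin n → ℝ) :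
    Matrix.toEuclideanCLM (𝕜 := ℝ) M ((WithLp.equiv 2 (Fin n → ℝ)).symm v)
      = (WithLp.equiv 2 (Fin n → ℝ)).symm (M *ᵥ v) := by
  exact Matrix.toEuclideanCLM_toLp M v

lemma enorm_mulVec_le (M : Matrix (Fin n) (Fin n) ℝ) (v : Fin n → ℝ) :
    enorm2 (M *ᵥ v) ≤ ‖Matrix.toEuclideanCLM (𝕜 := ℝ) M‖ * enorm2 v := by
  rw [enorm_eq, enorm_eq, ← clm_apply]
  exact (Matrix.toEuclideanCLM (𝕜 := ℝ) M).le_opNorm _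

lemma repr_mulVec (C : Matrix (Fin n) (Fin n) ℝ) (hH : C.IsHermitian) (v : Fin n → ℝ) (i : Fin n) :
    hH.eigenvectorBasis.repr ((WithLp.equiv 2 (Fin n → ℝ)).symm (C *ᵥ v)) i
      = hH.eigenvalues i * hH.eigenvectorBasis.repr ((WithLp.equiv 2 (Fin n → ℝ)).symm v) i := by
  rw [OrthonormalBasis.repr_apply_apply, OrthonormalBasis.repr_apply_apply]
  have hb := hH.mulVec_eigenvectorBasis i
  have hsym : ⇑(hH.eigenvectorBasis i) ᵥ* C = hH.eigenvalues i • ⇑(hH.eigenvectorBasis i) := by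
    rw [← Matrix.mulVec_transpose]
    rw [← Matrix.conjTranspose_eq_transpose_of_trivial, hH.eq, hb]
  calc inner ℝ (hH.eigenvectorBasis i) ((WithLp.equiv 2 (Fin n → ℝ)).symm (C *ᵥ v))
      = ⇑(hH.eigenvectorBasis i) ⬝ᵥ (C *ᵥ v) := by
        simp [PiLp.inner_apply, dotProduct, WithLp.equiv_symm_apply, mul_comm]
    _ = (⇑(hH.eigenvectorBasis i) ᵥ* C) ⬝ᵥ v := (dotProduct_mulVec _ _ _)
    _ = hH.eigenvalues i * (⇑(hH.eigenvectorBasis i) ⬝ᵥ v) := by rw [hsym, smul_dotProduct]; rfl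
    _ = hH.eigenvalues i * inner ℝ (hH.eigenvectorBasis i) ((WithLp.equiv 2 (Fin n → ℝ)).symm v) := by
        simp [PiLp.inner_apply, dotProduct, WithLp.equiv_symm_apply, mul_comm]

lemma norm_eq_sqrt_repr (b : OrthonormalBasis (Fin n) ℝ (EuclideanSpace ℝ (Fin n)))
    (x : EuclideanSpace ℝ (Fin n)) :
    ‖x‖ = Real.sqrt (∑ i, (b.repr x i)^2) := by
  rw [← b.repr.norm_map x, EuclideanSpace.norm_eq]
  simp [sq_abs]

lemma sq_mul_le (x l k : ℝ) (h0 : 0 ≤ l) (h : l ≤ k) : (l * x) ^ 2 ≤ (k * x) ^ 2 := by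
  have h1 : l ^ 2 ≤ k ^ 2 := pow_le_pow_left₀ h0 h 2
  calc (l * x) ^ 2 = l ^ 2 * x ^ 2 := by ring
    _ ≤ k ^ 2 * x ^ 2 := mul_le_mul_of_nonneg_right h1 (sq_nonneg x)
    _ = (k * x) ^ 2 := by ring

lemma sqrt_sum_sq_mono {f g : Fin n → ℝ} (h : ∀ i, f i ^ 2 ≤ g i ^ 2) :
    Real.sqrt (∑ i, f i ^ 2) ≤ Real.sqrt (∑ i, g i ^ 2) :=
  Real.sqrt_le_sqrt (Finset.sum_le_sum fun i _ => h i)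

lemma sqrt_sum_sq_smul (k : ℝ) (hk : 0 ≤ k) (a : Fin n → ℝ) :
    Real.sqrt (∑ i, (k * a i) ^ 2) = k * Real.sqrt (∑ i, a i ^ 2) := by
  have : ∑ i, (k * a i) ^ 2 = k ^ 2 * ∑ i, a i ^ 2 := by
    rw [Finset.mul_sum]; congr 1; ext i; ring
  rw [this, Real.sqrt_mul (sq_nonneg k), Real.sqrt_sq hk]

/-- Upper spectral bound. -/
lemma enorm_mulVec_le_sup [Nonempty (Fin n)] {C : Matrix (Fin n) (Fin n) ℝ}
    (hC : C.PosSemidef) (v : Fin n → ℝ) :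
    enorm2 (C *ᵥ v) ≤ (⨆ i, hC.1.eigenvalues i) * enorm2 v := by
  set b := hC.1.eigenvectorBasis
  set lam := hC.1.eigenvalues with hlam
  have hbdd : BddAbove (Set.range lam) := (Set.finite_range lam).bddAbove
  have hle : ∀ i, lam i ≤ ⨆ i, lam i := fun i => le_ciSup hbdd i
  have hsup0 : 0 ≤ ⨆ i, lam i :=
    le_trans (hC.eigenvalues_nonneg (Classical.arbitrary _)) (hle _)
  rw [enorm_eq, enorm_eq, norm_eq_sqrt_repr b, norm_eq_sqrt_repr b,
    ← sqrt_sum_sq_smul _ hsup0]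
  apply sqrt_sum_sq_mono
  intro i
  rw [repr_mulVec C hC.1 v i]
  exact sq_mul_le _ _ _ (hC.eigenvalues_nonneg i) (hle i)

/-- Lower spectral bound on the range. -/
lemma sInf_smul_enorm_le {C : Matrix (Fin n) (Fin n) ℝ}
    (hC : C.PosSemidef) (v : Fin n → ℝ) (hv : v ∈ LinearMap.range C.mulVecLin) :
    sInf {r : ℝ | (∃ i, hC.1.eigenvalues i = r) ∧ r ≠ 0} * enorm2 v ≤ enorm2 (C *ᵥ v) := by
  set b := hC.1.eigenvectorBasis
  set lam := hC.1.eigenvalues with hlam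
  set S := {r : ℝ | (∃ i, lam i = r) ∧ r ≠ 0} with hS
  set mu := sInf S with hmu
  have hfin : S.Finite := (Set.finite_range lam).subset fun r hr => hr.1
  by_cases hne : S.Nonempty
  · have hmem : mu ∈ S := hne.csInf_mem hfin
    have hmu_pos : 0 < mu := by
      obtain ⟨⟨i, hi⟩, hne0⟩ := hmem
      exact lt_of_le_of_ne (hi ▸ hC.eigenvalues_nonneg i) (Ne.symm hne0)
    have hmu_le : ∀ i, lam i ≠ 0 → mu ≤ lam i := fun i hi =>
      csInf_le hfin.bddBelow ⟨⟨i, rfl⟩, hi⟩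
    obtain ⟨w, hw⟩ := hv
    have hzero : ∀ i, lam i = 0 →
        b.repr ((WithLp.equiv 2 (Fin n → ℝ)).symm v) i = 0 := by
      intro i hi
      rw [← hw]
      have : (C.mulVecLin w : Fin n → ℝ) = C *ᵥ w := rfl
      rw [this, repr_mulVec C hC.1 w i, ← hlam, hi, zero_mul]
    rw [enorm_eq, enorm_eq, norm_eq_sqrt_repr b, norm_eq_sqrt_repr b,
      ← sqrt_sum_sq_smul _ hmu_pos.le]
    apply sqrt_sum_sq_mono
    intro i
    rw [repr_mulVec C hC.1 v i, ← hlam]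
    by_cases hi : lam i = 0
    · rw [hzero i hi]; simp
    · exact sq_mul_le _ _ _ hmu_pos.le (hmu_le i hi)
  · have : mu = 0 := by
      rw [hmu, Set.not_nonempty_iff_eq_empty.mp hne, Real.sInf_empty]
    rw [this, zero_mul]
    exact Real.sqrt_nonneg _

end ApxAux

open ApxAux

/-- If `B = L C Lᵀ` with `L` invertible and `C` nonzero symmetric PSD, `c` is in the column
span of `B`, `s` is in the column span of `C` with `C s = L⁻¹ c`, `‖s − s̃‖ ≤ ε·‖s‖`, and
`Lᵀ ỹ = s̃`, then `‖c − B ỹ‖ ≤ ε·κ(L)·κ_f(C)·‖c‖`. -/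
theorem approximation_error_bound (n : ℕ) (L C : Matrix (Fin n) (Fin n) ℝ)
    (hL : IsUnit L) (hC : C.PosSemidef) (hC0 : C ≠ 0)
    (B : Matrix (Fin n) (Fin n) ℝ) (hB : B = L * C * Lᵀ)
    (ε : ℝ) (hε : 0 ≤ ε)
    (c : Fin n → ℝ) (hc : c ∈ LinearMap.range B.mulVecLin)
    (s : Fin n → ℝ) (hs : s ∈ LinearMap.range C.mulVecLin)
    (hCs : C *ᵥ s = L⁻¹ *ᵥ c)
    (st : Fin n → ℝ) (hst : enorm2 (s - st) ≤ ε * enorm2 s)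
    (yt : Fin n → ℝ) (hyt : Lᵀ *ᵥ yt = st) :
    enorm2 (c - B *ᵥ yt) ≤ ε * kappaMat L * kappaSingle C hC.1 * enorm2 c := by
  -- n ≠ 0
  rcases Nat.eq_zero_or_pos n with hn | hn
  · subst hn; exact absurd (Subsingleton.elim C 0) hC0
  haveI : Nonempty (Fin n) := Fin.pos_iff_nonempty.mp hn
  set lam := hC.1.eigenvalues with hlam
  set S := {r : ℝ | (∃ i, lam i = r) ∧ r ≠ 0} with hSdef
  set mu := sInf S with hmu
  set lmax := ⨆ i, lam i with hlmax
  -- S nonempty (else C = 0)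
  have hSne : S.Nonempty := by
    by_contra hne
    apply hC0
    have hz : ∀ i, lam i = 0 := by
      intro i
      by_contra hi
      exact hne ⟨lam i, ⟨i, rfl⟩, hi⟩
    have : ∀ v : Fin n → ℝ, C *ᵥ v = 0 := by
      intro v
      have hrz : hC.1.eigenvectorBasis.repr
          ((WithLp.equiv 2 (Fin n → ℝ)).symm (C *ᵥ v)) = 0 := by
        ext i
        rw [repr_mulVec C hC.1 v i, show hC.1.eigenvalues i = 0 from hz i, zero_mul]
        rfl
      have := (map_eq_zero_iff _ hC.1.eigenvectorBasis.repr.injective).mp hrz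
      have h2 := congrArg (WithLp.equiv 2 (Fin n → ℝ)) this
      simpa using h2
    ext i j
    have := congrFun (this (Pi.single j 1)) i
    simpa [Matrix.mulVec_single] using this
  have hfin : S.Finite := (Set.finite_range lam).subset fun r hr => hr.1
  have hmu_pos : 0 < mu := by
    obtain ⟨⟨i, hi⟩, hne0⟩ := hSne.csInf_mem hfin
    have h0 : (0:ℝ) ≤ sInf S := le_trans (hC.eigenvalues_nonneg i) (le_of_eq hi)
    exact lt_of_le_of_ne h0 (Ne.symm hne0)
  have hlmax0 : 0 ≤ lmax :=
    le_trans (hC.eigenvalues_nonneg (Classical.arbitrary _))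
      (le_ciSup (Set.finite_range lam).bddAbove _)
  -- algebraic identity
  have hdet : IsUnit L.det := (Matrix.isUnit_iff_isUnit_det L).mp hL
  have h1 : L *ᵥ (L⁻¹ *ᵥ c) = c := by
    rw [Matrix.mulVec_mulVec, Matrix.mul_nonsing_inv _ hdet, Matrix.one_mulVec]
  have key : c - B *ᵥ yt = L *ᵥ (C *ᵥ (s - st)) := by
    have h2 : B *ᵥ yt = L *ᵥ (C *ᵥ st) := by
      rw [hB, ← Matrix.mulVec_mulVec, ← Matrix.mulVec_mulVec, hyt]
    rw [h2, Matrix.mulVec_sub, Matrix.mulVec_sub, hCs, h1]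
  -- norms
  set nL : ℝ := ‖Matrix.toEuclideanCLM (𝕜 := ℝ) L‖ with hnL
  set nLi : ℝ := ‖Matrix.toEuclideanCLM (𝕜 := ℝ) L⁻¹‖ with hnLi
  have hs_bound : enorm2 s ≤ mu⁻¹ * (nLi * enorm2 c) := by
    have h3 : mu * enorm2 s ≤ enorm2 (C *ᵥ s) := sInf_smul_enorm_le hC s hs
    have h4 : enorm2 (C *ᵥ s) ≤ nLi * enorm2 c := by
      rw [hCs]; exact enorm_mulVec_le _ _
    calc enorm2 s = mu⁻¹ * (mu * enorm2 s) := by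
          rw [← mul_assoc, inv_mul_cancel₀ hmu_pos.ne', one_mul]
      _ ≤ mu⁻¹ * (nLi * enorm2 c) :=
          mul_le_mul_of_nonneg_left (h3.trans h4) (inv_nonneg.mpr hmu_pos.le)
  have hnL0 : (0:ℝ) ≤ nL := norm_nonneg _
  have hnLi0 : (0:ℝ) ≤ nLi := norm_nonneg _
  calc enorm2 (c - B *ᵥ yt) = enorm2 (L *ᵥ (C *ᵥ (s - st))) := by rw [key]
    _ ≤ nL * enorm2 (C *ᵥ (s - st)) := enorm_mulVec_le _ _
    _ ≤ nL * (lmax * enorm2 (s - st)) := by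
        have := enorm_mulVec_le_sup hC (s - st)
        exact mul_le_mul_of_nonneg_left this hnL0
    _ ≤ nL * (lmax * (ε * enorm2 s)) := by
        apply mul_le_mul_of_nonneg_left _ hnL0
        exact mul_le_mul_of_nonneg_left hst hlmax0
    _ ≤ nL * (lmax * (ε * (mu⁻¹ * (nLi * enorm2 c)))) := by
        apply mul_le_mul_of_nonneg_left _ hnL0
        apply mul_le_mul_of_nonneg_left _ hlmax0
        exact mul_le_mul_of_nonneg_left hs_bound hε
    _ = ε * kappaMat L * kappaSingle C hC.1 * enorm2 c := by
        rw [kappaMat, kappaSingle, ← hnL, ← hnLi, ← hlam, ← hlmax, ← hSdef, ← hmu,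
          div_eq_mul_inv]
        ring
end
end

section
/- Let w be a weighting on a finite set V with Laplacian B = L_w, and let a ∈ V be a vertex of degree 1: there is exactly one u ∈ V with w(a,u) > 0. Then B_{aa} = w(a,u) > 0, and the Schur complement of B with respect to the (a,a) entry — the (V∖{a})×(V∖{a}) matrix B' with B'_{uv} = B_{uv} − B_{ua} B_{av} / B_{aa} — equals the Laplacian of the weighting obtained by restricting w to V∖{a} (i.e. the weighted graph with a and its incident edge removed). -/
open Matrix Finset

noncomputable section

/-- Eliminating a vertex `a` of degree 1 (with unique neighbor `u`): the diagonal entry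
`B_{aa}` equals `w(a,u) > 0`, and the Schur complement of `B = L_w` with respect to the
`(a,a)` entry is the Laplacian of the weighting restricted to `V ∖ {a}`. -/
theorem schur_degree_one {V : Type*} [Fintype V] [DecidableEq V]
    (w : V → V → ℝ) (hw : IsWeighting w) (a u : V)
    (hu : 0 < w a u) (huniq : ∀ v, 0 < w a v → v = u) :
    lap w a a = w a u ∧ 0 < lap w a a ∧
      ∀ p q : {v : V // v ≠ a},
        lap w ↑p ↑q - lap w ↑p a * lap w a ↑q / lap w a a =
          lap (fun p q : {v : V // v ≠ a} => w ↑p ↑q) p q := by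
  have hzero : ∀ v, v ≠ u → w a v = 0 := by
    intro v hv
    rcases (hw.nonneg a v).lt_or_eq with h | h
    · exact absurd (huniq v h) hv
    · exact h.symm
  have haa' : (∑ x, w a x) = w a u :=
    Finset.sum_eq_single u (fun b _ hb => hzero b hb) (by simp)
  have haa : lap w a a = w a u := by simp only [lap, if_pos rfl]; exact haa'
  have hsum : ∀ q : {v : V // v ≠ a},
      (∑ x : {v : V // v ≠ a}, w q x) = (∑ x : V, w (q:V) x) - w (q:V) a := by
    intro q
    rw [← Finset.sum_subtype (Finset.univ.erase a)
        (fun x => by simp [Finset.mem_erase]) (fun x => w (q:V) x),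
      Finset.sum_erase_eq_sub (Finset.mem_univ a)]
  refine ⟨haa, haa ▸ hu, fun p q => ?_⟩
  by_cases hpq : (p : V) = (q : V)
  · have hpq' : p = q := Subtype.ext hpq
    subst hpq'
    simp only [lap]
    rw [if_pos trivial, if_pos trivial, if_pos trivial, if_neg p.2, if_neg (Ne.symm p.2), haa', hsum,
      hw.symm (p : V) a]
    by_cases hpu : (p : V) = u
    · rw [hpu, neg_mul_neg, mul_div_assoc, div_self hu.ne', mul_one]
    · rw [hzero _ hpu]; ring
  · have hne : p ≠ q := fun h => hpq (congrArg Subtype.val h)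
    simp only [lap]
    rw [if_neg hpq, if_neg hne, if_neg p.2, if_neg (Ne.symm q.2), haa']
    by_cases hqu : (q : V) = u
    · have hpu : (p : V) ≠ u := fun h => hpq (h.trans hqu.symm)
      rw [hw.symm (p : V) a, hzero _ hpu]; ring
    · rw [hzero _ hqu]; ring
end
end

section
/- Let w be a weighting on a finite set V with Laplacian B = L_w, and let a ∈ V be a vertex of degree 2: there are exactly two vertices b, c ∈ V with w(a,b) = w₁ > 0 and w(a,c) = w₂ > 0. Then the Schur complement of B with respect to the (a,a) entry — the (V∖{a})×(V∖{a}) matrix B' with B'_{uv} = B_{uv} − B_{ua} B_{av} / B_{aa} — equals the Laplacian of the weighting w' on V∖{a} given by w'(u,v) = w(u,v) for all pairs {u,v} ≠ {b,c}, and w'(b,c) = w(b,c) + 1/(1/w₁ + 1/w₂). -/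
open Matrix Finset

noncomputable section

/-- Eliminating a vertex `a` of degree 2 (with neighbors `b`, `c`, edge weights `w₁`, `w₂`):
the Schur complement of `B = L_w` with respect to the `(a,a)` entry is the Laplacian of the
weighting on `V ∖ {a}` which agrees with `w` except that the weight of the pair `{b,c}` is
increased by `1/(1/w₁ + 1/w₂)`. -/
theorem schur_degree_two {V : Type*} [Fintype V] [DecidableEq V]
    (w : V → V → ℝ) (hw : IsWeighting w) (a b c : V) (hbc : b ≠ c)
    (w₁ w₂ : ℝ) (hab : w a b = w₁) (hac : w a c = w₂)
    (h1 : 0 < w₁) (h2 : 0 < w₂)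
    (hdeg : ∀ v, 0 < w a v → v = b ∨ v = c) :
    ∀ p q : {v : V // v ≠ a},
      lap w ↑p ↑q - lap w ↑p a * lap w a ↑q / lap w a a =
        lap (fun p q : {v : V // v ≠ a} =>
          w ↑p ↑q +
            if ((p : V) = b ∧ (q : V) = c) ∨ ((p : V) = c ∧ (q : V) = b)
            then 1 / (1 / w₁ + 1 / w₂) else 0) p q := by
  obtain ⟨hsymm, hnn, hdiag⟩ := hw
  have hb : b ≠ a := by rintro rfl; rw [hdiag] at hab; exact h1.ne hab
  have hc : c ≠ a := by rintro rfl; rw [hdiag] at hac; exact h2.ne hac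
  have hz : ∀ v, v ≠ b → v ≠ c → w a v = 0 := by
    intro v hvb hvc
    rcases (hnn a v).lt_or_eq with h | h
    · rcases hdeg v h with rfl | rfl
      · exact absurd rfl hvb
      · exact absurd rfl hvc
    · exact h.symm
  have hsa : ∑ x, w a x = w₁ + w₂ := by
    rw [← Finset.sum_subset (Finset.subset_univ ({b, c} : Finset V))]
    · rw [Finset.sum_pair hbc, hab, hac]
    · intro x _ hx
      simp only [Finset.mem_insert, Finset.mem_singleton, not_or] at hx
      exact hz x hx.1 hx.2
  have hpos : (0:ℝ) < w₁ + w₂ := by linarith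
  have hT : 1 / (1 / w₁ + 1 / w₂) = w₁ * w₂ / (w₁ + w₂) := by
    rw [div_add_div _ _ (ne_of_gt h1) (ne_of_gt h2), one_div_div]
    rw [one_mul, mul_one]; ring_nf
  have hsub : ∀ f : V → ℝ, ∑ x : {v : V // v ≠ a}, f ↑x = ∑ x, f x - f a := by
    intro f
    rw [← Finset.sum_subtype (Finset.univ.erase a) (by simp) f,
      eq_sub_iff_add_eq, Finset.sum_erase_add _ _ (Finset.mem_univ a)]
  rintro ⟨p, hp⟩ ⟨q, hq⟩
  by_cases hpq : p = q
  · subst hpq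
    simp only [lap, if_pos rfl, Subtype.mk.injEq, if_neg hp,
      if_neg (Ne.symm hp), hsa, hT, ite_true]
    rw [hsub (fun y => w p y +
      if p = b ∧ y = c ∨ p = c ∧ y = b then w₁ * w₂ / (w₁ + w₂) else 0)]
    simp only [Ne.symm hb, Ne.symm hc, and_false, or_self, if_false, add_zero]
    rw [Finset.sum_add_distrib]
    by_cases hpb : p = b
    · subst hpb
      have hpc : p ≠ c := hbc
      simp only [eq_self_iff_true, true_and, hpc, false_and, or_false]
      rw [Finset.sum_ite_eq' Finset.univ c (fun _ => w₁ * w₂ / (w₁ + w₂)),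
        if_pos (Finset.mem_univ c), hsymm p a, hab]
      field_simp; ring
    · by_cases hpc : p = c
      · subst hpc
        simp only [hpb, false_and, eq_self_iff_true, true_and, false_or]
        rw [Finset.sum_ite_eq' Finset.univ b (fun _ => w₁ * w₂ / (w₁ + w₂)),
          if_pos (Finset.mem_univ b), hsymm p a, hac]
        field_simp; ring
      · simp only [hpb, hpc, false_and, or_self, if_false, Finset.sum_const_zero, add_zero]
        rw [hsymm p a, hz p hpb hpc]
        ring
  · have hpq' : (⟨p, hp⟩ : {v : V // v ≠ a}) ≠ ⟨q, hq⟩ := by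
      simp [Subtype.ext_iff, hpq]
    simp only [lap, if_neg hpq, if_neg hp, if_neg (Ne.symm hq), if_neg hpq',
      eq_self_iff_true, ite_true, hsa, hT]
    rw [hsymm p a]
    by_cases hpb : p = b
    · have hpc : p ≠ c := hpb ▸ hbc
      by_cases hqc : q = c
      · rw [if_pos (Or.inl ⟨hpb, hqc⟩), hpb, hqc, hab, hac]
        ring
      · have hqb : q ≠ b := fun h => hpq (hpb.trans h.symm)
        rw [if_neg (by rintro (⟨-, h⟩ | ⟨h, -⟩); exacts [hqc h, hpc h]), hz q hqb hqc]
        ring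
    · by_cases hpc : p = c
      · have hqc : q ≠ c := fun h => hpq (hpc.trans h.symm)
        by_cases hqb : q = b
        · rw [if_pos (Or.inr ⟨hpc, hqb⟩), hpc, hqb, hab, hac]
          ring
        · rw [if_neg (by rintro (⟨-, h⟩ | ⟨-, h⟩); exacts [hqc h, hqb h]), hz q hqb hqc]
          ring
      · rw [if_neg (by rintro (⟨h, -⟩ | ⟨h, -⟩); exacts [hpb h, hpc h]), hz p hpb hpc]
        ring
end
end

section
/- (Gremban's reduction) Let A be a symmetric real n×n matrix with A_{ii} ≥ Σ_{j≠i} |A_{ij}| for all i. Write A = D + A_n + A_p where D is the diagonal of A, A_n consists of the negative off-diagonal entries of A (and is zero elsewhere), and A_p consists of the positive off-diagonal entries of A (and is zero elsewhere). Let M be the 2n×2n block matrix [[D + A_n, −A_p], [−A_p, D + A_n]]. Then: (1) M is symmetric, has nonpositive off-diagonal entries, has nonnegative diagonal entries, and is diagonally dominant (M_{ii} ≥ Σ_{j≠i} |M_{ij}| for all i); (2) for all x, b ∈ ℝⁿ, A x = b if and only if M (x, −x) = (b, −b); and (3) if x, x' ∈ ℝⁿ satisfy M (x, x') = (b, −b),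 then A ((x − x')/2) = b. -/
open Matrix Finset

noncomputable section

/-- **Gremban's reduction.** Let `A` be symmetric with `A_{ii} ≥ Σ_{j≠i} |A_{ij}|`, and write
`A = D + Aₙ + Aₚ` where `D` is the diagonal part of `A`, `Aₙ` its negative off-diagonal part
and `Aₚ` its positive off-diagonal part. Let `M = [[D + Aₙ, −Aₚ], [−Aₚ, D + Aₙ]]`. Then
(1) `M` is symmetric, has nonpositive off-diagonals, nonnegative diagonals, and is diagonally
dominant; (2) `A x = b` iff `M (x, −x) = (b, −b)`; and (3) if `M (x, x') = (b, −b)` then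
`A ((x − x')/2) = b`. -/
theorem gremban_reduction (n : ℕ) (A : Matrix (Fin n) (Fin n) ℝ) (hA : A.IsSymm)
    (hdd : ∀ i, ∑ j ∈ Finset.univ.erase i, |A i j| ≤ A i i) :
    let D : Matrix (Fin n) (Fin n) ℝ := Matrix.diagonal fun i => A i i
    let An : Matrix (Fin n) (Fin n) ℝ := fun i j => if i = j then 0 else min (A i j) 0
    let Ap : Matrix (Fin n) (Fin n) ℝ := fun i j => if i = j then 0 else max (A i j) 0
    let M : Matrix (Fin n ⊕ Fin n) (Fin n ⊕ Fin n) ℝ :=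
      Matrix.fromBlocks (D + An) (-Ap) (-Ap) (D + An)
    (M.IsSymm ∧ (∀ i j, i ≠ j → M i j ≤ 0) ∧ (∀ i, 0 ≤ M i i) ∧
        ∀ i, ∑ j ∈ Finset.univ.erase i, |M i j| ≤ M i i) ∧
      (∀ x b : Fin n → ℝ, A *ᵥ x = b ↔ M *ᵥ Sum.elim x (-x) = Sum.elim b (-b)) ∧
      (∀ x x' b : Fin n → ℝ, M *ᵥ Sum.elim x x' = Sum.elim b (-b) →
        A *ᵥ ((2 : ℝ)⁻¹ • (x - x')) = b) := by
  intro D An Ap M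
  have hAsym : ∀ i j, A j i = A i j := fun i j => hA.apply i j
  have hdiag : ∀ i, 0 ≤ A i i := fun i =>
    le_trans (Finset.sum_nonneg fun j _ => abs_nonneg _) (hdd i)
  have hsum : D + An + Ap = A := by
    ext i j
    by_cases h : i = j
    · subst h; simp only [Matrix.add_apply]; simp [D, An, Ap, Matrix.diagonal]
    · simp only [Matrix.add_apply]; simp [D, An, Ap, Matrix.diagonal, h, min_add_max]
  have hDAnsym : (D + An).IsSymm := by
    ext i j
    by_cases h : i = j
    · subst h; rfl
    · simp only [Matrix.transpose_apply, Matrix.add_apply]; simp [D, An, Matrix.diagonal, h, (Ne.symm h : j ≠ i), hAsym i j]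
  have hApsym : Ap.IsSymm := by
    ext i j
    by_cases h : i = j
    · subst h; rfl
    · simp [Matrix.transpose, Ap, h, (Ne.symm h : j ≠ i), hAsym i j]
  have hApnn : ∀ i j, 0 ≤ Ap i j := by
    intro i j; simp only [Ap]; split
    · exact le_refl 0
    · exact le_max_right _ _
  have hAnnp : ∀ i j, An i j ≤ 0 := by
    intro i j; simp only [An]; split
    · exact le_refl 0
    · exact min_le_right _ _
  have hMdiagL : ∀ i, (D + An) i i = A i i := by
    intro i; simp only [Matrix.add_apply]; simp [D, An, Matrix.diagonal]
  have hOff : ∀ i j : Fin n, i ≠ j → (D + An) i j = An i j := by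
    intro i j h; simp [D, Matrix.diagonal, h]
  have hAbsNeg : ∀ i j : Fin n, |(-Ap) i j| = Ap i j := by
    intro i j
    rw [Matrix.neg_apply, abs_neg, abs_of_nonneg (hApnn i j)]
  have key : ∀ i : Fin n,
      ∑ j ∈ Finset.univ.erase i, (|An i j| + |Ap i j|) ≤ A i i := by
    intro i
    refine le_trans (le_of_eq (Finset.sum_congr rfl ?_)) (hdd i)
    intro j hj
    have h : j ≠ i := Finset.ne_of_mem_erase hj
    have h' : i ≠ j := Ne.symm h
    have hmm : |min (A i j) 0| + |max (A i j) 0| = |A i j| := by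
      rcases le_total (A i j) 0 with hc | hc
      · rw [min_eq_left hc, max_eq_right hc]; simp
      · rw [min_eq_right hc, max_eq_left hc]; simp
    simpa [An, Ap, h'] using hmm
  -- block row sums
  have hsumDAn : ∀ i : Fin n, ∑ j : Fin n, |(D + An) i j|
      = |A i i| + ∑ j ∈ Finset.univ.erase i, |An i j| := by
    intro i
    rw [← Finset.sum_erase_add _ _ (Finset.mem_univ i), hMdiagL i, add_comm]
    congr 1
    exact Finset.sum_congr rfl fun j hj =>
      by rw [hOff i j (Ne.symm (Finset.ne_of_mem_erase hj))]
  have hsumAp : ∀ i : Fin n, ∑ j : Fin n, |(-Ap) i j|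
      = ∑ j ∈ Finset.univ.erase i, |Ap i j| := by
    intro i
    rw [← Finset.sum_erase_add _ _ (Finset.mem_univ i)]
    have h0 : |(-Ap) i i| = 0 := by rw [hAbsNeg]; simp [Ap]
    rw [h0, add_zero]
    exact Finset.sum_congr rfl fun j hj => by
      rw [hAbsNeg, abs_of_nonneg (hApnn i j)]
  have part1 : M.IsSymm ∧ (∀ i j, i ≠ j → M i j ≤ 0) ∧ (∀ i, 0 ≤ M i i) ∧
      ∀ i, ∑ j ∈ Finset.univ.erase i, |M i j| ≤ M i i := by
    refine ⟨?_, ?_, ?_, ?_⟩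
    · show (Matrix.fromBlocks (D + An) (-Ap) (-Ap) (D + An)).IsSymm
      rw [Matrix.IsSymm, Matrix.fromBlocks_transpose, Matrix.transpose_neg, hApsym.eq,
        hDAnsym.eq]
    · rintro (i | i) (j | j) hij
      · have h : i ≠ j := fun h => hij (by rw [h])
        show (D + An) i j ≤ 0
        rw [hOff i j h]; exact hAnnp i j
      · show (-Ap) i j ≤ 0
        rw [Matrix.neg_apply]; exact neg_nonpos.mpr (hApnn i j)
      · show (-Ap) i j ≤ 0
        rw [Matrix.neg_apply]; exact neg_nonpos.mpr (hApnn i j)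
      · have h : i ≠ j := fun h => hij (by rw [h])
        show (D + An) i j ≤ 0
        rw [hOff i j h]; exact hAnnp i j
    · rintro (i | i) <;> (show (0:ℝ) ≤ (D + An) i i; rw [hMdiagL i]; exact hdiag i)
    · rintro (i | i)
      · have hrow : ∑ j ∈ Finset.univ.erase (Sum.inl i : Fin n ⊕ Fin n), |M (Sum.inl i) j|
            = ∑ j ∈ Finset.univ.erase i, (|An i j| + |Ap i j|) := by
          rw [Finset.sum_erase_eq_sub (Finset.mem_univ _)]
          have htot : ∑ j : Fin n ⊕ Fin n, |M (Sum.inl i) j|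
              = |A i i| + ∑ j ∈ Finset.univ.erase i, (|An i j| + |Ap i j|) := by
            rw [Fintype.sum_sum_type]
            have e1 : ∀ j : Fin n, |M (Sum.inl i) (Sum.inl j)| = |(D + An) i j| := fun j => rfl
            have e2 : ∀ j : Fin n, |M (Sum.inl i) (Sum.inr j)| = |(-Ap) i j| := fun j => rfl
            simp only [e1, e2, hsumDAn i, hsumAp i, Finset.sum_add_distrib]
            ring
          have hMii : |M (Sum.inl i) (Sum.inl i)| = |A i i| := by
            show |(D + An) i i| = |A i i|
            rw [hMdiagL i]
          rw [htot, hMii]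
          ring
        rw [hrow]
        show ∑ j ∈ Finset.univ.erase i, (|An i j| + |Ap i j|) ≤ (D + An) i i
        rw [hMdiagL i]; exact key i
      · have hrow : ∑ j ∈ Finset.univ.erase (Sum.inr i : Fin n ⊕ Fin n), |M (Sum.inr i) j|
            = ∑ j ∈ Finset.univ.erase i, (|An i j| + |Ap i j|) := by
          rw [Finset.sum_erase_eq_sub (Finset.mem_univ _)]
          have htot : ∑ j : Fin n ⊕ Fin n, |M (Sum.inr i) j|
              = |A i i| + ∑ j ∈ Finset.univ.erase i, (|An i j| + |Ap i j|) := by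
            rw [Fintype.sum_sum_type]
            have e1 : ∀ j : Fin n, |M (Sum.inr i) (Sum.inr j)| = |(D + An) i j| := fun j => rfl
            have e2 : ∀ j : Fin n, |M (Sum.inr i) (Sum.inl j)| = |(-Ap) i j| := fun j => rfl
            simp only [e1, e2, hsumDAn i, hsumAp i, Finset.sum_add_distrib]
            ring
          have hMii : |M (Sum.inr i) (Sum.inr i)| = |A i i| := by
            show |(D + An) i i| = |A i i|
            rw [hMdiagL i]
          rw [htot, hMii]
          ring
        rw [hrow]
        show ∑ j ∈ Finset.univ.erase i, (|An i j| + |Ap i j|) ≤ (D + An) i i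
        rw [hMdiagL i]; exact key i
  refine ⟨part1, ?_, ?_⟩
  · intro x b
    have hmv : M *ᵥ Sum.elim x (-x)
        = Sum.elim ((D + An) *ᵥ x + (-Ap) *ᵥ (-x)) ((-Ap) *ᵥ x + (D + An) *ᵥ (-x)) := by
      have := Matrix.fromBlocks_mulVec (D + An) (-Ap) (-Ap) (D + An) (Sum.elim x (-x))
      simpa [Sum.elim_comp_inl, Sum.elim_comp_inr] using this
    have e1 : (D + An) *ᵥ x + (-Ap) *ᵥ (-x) = A *ᵥ x := by
      rw [Matrix.neg_mulVec, Matrix.mulVec_neg, neg_neg, ← Matrix.add_mulVec, hsum]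
    have e2 : (-Ap) *ᵥ x + (D + An) *ᵥ (-x) = -(A *ᵥ x) := by
      rw [Matrix.neg_mulVec, Matrix.mulVec_neg, ← neg_add, add_comm, ← Matrix.add_mulVec, hsum]
    rw [hmv, e1, e2]
    constructor
    · intro h; rw [h]
    · intro h
      funext j
      simpa using congrFun h (Sum.inl j)
  · intro x x' b h
    have hmv : M *ᵥ Sum.elim x x'
        = Sum.elim ((D + An) *ᵥ x + (-Ap) *ᵥ x') ((-Ap) *ᵥ x + (D + An) *ᵥ x') := by
      have := Matrix.fromBlocks_mulVec (D + An) (-Ap) (-Ap) (D + An) (Sum.elim x x')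
      simpa [Sum.elim_comp_inl, Sum.elim_comp_inr] using this
    rw [hmv] at h
    have h1 : (D + An) *ᵥ x + (-Ap) *ᵥ x' = b := funext fun j => by
      simpa using congrFun h (Sum.inl j)
    have h2 : (-Ap) *ᵥ x + (D + An) *ᵥ x' = -b := funext fun j => by
      simpa using congrFun h (Sum.inr j)
    rw [Matrix.neg_mulVec] at h1 h2
    have keyv : A *ᵥ (x - x') = b + b := by
      have e : A *ᵥ (x - x')
          = ((D + An) *ᵥ x - Ap *ᵥ x') - (-(Ap *ᵥ x) + (D + An) *ᵥ x') := by
        rw [← hsum, Matrix.add_mulVec, Matrix.mulVec_sub, Matrix.mulVec_sub]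
        abel
      have h1' : (D + An) *ᵥ x - Ap *ᵥ x' = b := by rw [← h1]; abel
      rw [e, h1', h2]
      abel
    rw [Matrix.mulVec_smul, keyv]
    funext j
    show (2:ℝ)⁻¹ * (b j + b j) = b j
    ring
end
end
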